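/- Let X be a random vector in R^D with E||X||_2² ≤ M, let V_d be a fixed D×d matrix with orthonormal columns, and let V̂_d be a random D×d matrix with orthonormal columns, independent of X, satisfying E||V̂_d V̂_d^T − V_d V_d^T||_F² ≤ 4M²/(δ_d² n) for some δ_d > 0 and n ≥ 1. Let Z ~ N(0, σ²I_D) be independent of (X, V̂_d). Then W₂(V̂_d V̂_d^T X + Z, V_d V_d^T X + Z) ≤ 2M^{3/2}·δ_d^{-1}·n^{-1/2}. -/

import Mathlib

open MeasureTheory ProbabilityTheory Real
open scoped ENNReal NNReal RealInnerProductSpace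

noncomputable section

/-- The isotropic Gaussian measure `N(0, σ²I_D)` on `ℝ^D`. -/
def stdGaussian (D : ℕ) (σ : ℝ) : Measure (EuclideanSpace ℝ (Fin D)) :=
  (Measure.pi fun _ : Fin D => gaussianReal 0 ⟨σ ^ 2, sq_nonneg σ⟩).map
    (MeasurableEquiv.toLp 2 (Fin D → ℝ))

/-- Differential entropy `h(μ) = -∫ p log p` of a measure on `ℝ^D`
(with `p` the density w.r.t. Lebesgue measure). -/
def diffEntropy {D : ℕ} (μ : Measure (EuclideanSpace ℝ (Fin D))) : ℝ :=
  -∫ x, (μ.rnDeriv volume x).toReal * Real.log (μ.rnDeriv volume x).toReal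

/-- The 2-Wasserstein distance `W₂(μ,ν) = (inf over couplings of E‖A-B‖²)^(1/2)`. -/
def W2 {D : ℕ} (μ ν : Measure (EuclideanSpace ℝ (Fin D))) : ℝ :=
  Real.sqrt (sInf {r : ℝ |
    ∃ γ : Measure (EuclideanSpace ℝ (Fin D) × EuclideanSpace ℝ (Fin D)),
      IsProbabilityMeasure γ ∧ γ.map Prod.fst = μ ∧ γ.map Prod.snd = ν ∧
      r = ∫ p, ‖p.1 - p.2‖ ^ 2 ∂γ})

/-- The `D × D` projection matrix `V Vᵀ` associated with columns `V_1,...,V_d`. -/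
def projMatrix {D d : ℕ} (V : Fin d → EuclideanSpace ℝ (Fin D)) : Matrix (Fin D) (Fin D) ℝ :=
  Matrix.of fun i k => ∑ j, V j i * V j k

/-- Squared Frobenius norm of a matrix. -/
def frobSq {D : ℕ} (A : Matrix (Fin D) (Fin D) ℝ) : ℝ := ∑ i, ∑ k, (A i k) ^ 2

/-!
Couple the two laws synchronously: feed the same `X` and the same noise `Z` into both
projections. The noise cancels, so `W₂² ≤ E‖(V̂V̂ᵀ - VVᵀ)X‖² ≤ E[‖V̂V̂ᵀ - VVᵀ‖_F² ‖X‖²]`, and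
independence of `V̂` and `X` splits the last expectation into
`E‖V̂V̂ᵀ - VVᵀ‖_F² · E‖X‖² ≤ 4M²/(δ²n) · M`.
-/

lemma sum_inner_smul_apply {D d : ℕ} (V : Fin d → EuclideanSpace ℝ (Fin D))
    (x : EuclideanSpace ℝ (Fin D)) (i : Fin D) :
    (∑ j, ⟪V j, x⟫ • V j) i = ∑ k, projMatrix V i k * x k := by
  simp only [projMatrix, Matrix.of_apply, PiLp.inner_apply, WithLp.ofLp_sum, Finset.sum_apply,
    PiLp.smul_apply, smul_eq_mul, RCLike.inner_apply, conj_trivial, Finset.sum_mul]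
  rw [Finset.sum_comm]
  exact Finset.sum_congr rfl fun k _ => Finset.sum_congr rfl fun j _ => by ring

lemma sq_norm_le_frobSq_mul {D : ℕ} (A : Matrix (Fin D) (Fin D) ℝ) {x y : EuclideanSpace ℝ (Fin D)}
    (hy : ∀ i, y i = ∑ k, A i k * x k) : ‖y‖ ^ 2 ≤ frobSq A * ‖x‖ ^ 2 := by
  rw [EuclideanSpace.real_norm_sq_eq, EuclideanSpace.real_norm_sq_eq, frobSq, Finset.sum_mul]
  exact Finset.sum_le_sum fun i _ => hy i ▸ Finset.sum_mul_sq_le_sq_mul_sq _ _ _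

lemma sq_norm_sub_projection_le {D d : ℕ} (V W : Fin d → EuclideanSpace ℝ (Fin D))
    (x : EuclideanSpace ℝ (Fin D)) :
    ‖(∑ j, ⟪V j, x⟫ • V j) - ∑ j, ⟪W j, x⟫ • W j‖ ^ 2
      ≤ frobSq (projMatrix V - projMatrix W) * ‖x‖ ^ 2 :=
  sq_norm_le_frobSq_mul _ fun i => by
    simp only [PiLp.sub_apply, sum_inner_smul_apply, Matrix.sub_apply, sub_mul,
      Finset.sum_sub_distrib]

lemma abs_projMatrix_apply_le {D d : ℕ} {V : Fin d → EuclideanSpace ℝ (Fin D)}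
    (hV : ∀ j, ‖V j‖ ≤ 1) (i k : Fin D) : |projMatrix V i k| ≤ d := by
  have hcoord : ∀ j i, |V j i| ≤ 1 := fun j i => (PiLp.norm_apply_le (V j) i).trans (hV j)
  calc |∑ j, V j i * V j k| ≤ ∑ j, |V j i * V j k| := Finset.abs_sum_le_sum_abs _ _
    _ ≤ ∑ _j : Fin d, (1 : ℝ) := Finset.sum_le_sum fun j _ => by
        rw [abs_mul]; exact mul_le_one₀ (hcoord j i) (abs_nonneg _) (hcoord j k)
    _ = d := by simp

lemma frobSq_projMatrix_sub_le {D d : ℕ} {V : Fin d → EuclideanSpace ℝ (Fin D)}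
    (hV : ∀ j, ‖V j‖ ≤ 1) (B : Matrix (Fin D) (Fin D) ℝ) :
    frobSq (projMatrix V - B) ≤ ∑ i, ∑ k, (d + |B i k|) ^ 2 := by
  refine Finset.sum_le_sum fun i _ => Finset.sum_le_sum fun k _ => ?_
  rw [Matrix.sub_apply, ← sq_abs]
  gcongr
  exact (abs_sub _ _).trans (by gcongr; exact abs_projMatrix_apply_le hV i k)

lemma continuous_frobSq_projMatrix_sub {D d : ℕ} (B : Matrix (Fin D) (Fin D) ℝ) :
    Continuous fun V : Fin d → EuclideanSpace ℝ (Fin D) => frobSq (projMatrix V - B) := by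
  simp only [frobSq, projMatrix, Matrix.sub_apply, Matrix.of_apply]
  fun_prop

lemma integral_sq_norm_sub_projection_le {Ω : Type*} [MeasurableSpace Ω] {P : Measure Ω}
    {D d : ℕ} {X : Ω → EuclideanSpace ℝ (Fin D)} (hX : Measurable X)
    (hX2 : Integrable (fun ω => ‖X ω‖ ^ 2) P) {V : Ω → Fin d → EuclideanSpace ℝ (Fin D)}
    (hVmeas : Measurable V) (hV : ∀ ω j, ‖V ω j‖ ≤ 1) (hVX : IndepFun V X P)
    (W : Fin d → EuclideanSpace ℝ (Fin D)) :
    ∫ ω, ‖(∑ j, ⟪V ω j, X ω⟫ • V ω j) - ∑ j, ⟪W j, X ω⟫ • W j‖ ^ 2 ∂P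
      ≤ (∫ ω, frobSq (projMatrix (V ω) - projMatrix W) ∂P) * ∫ ω, ‖X ω‖ ^ 2 ∂P := by
  set F := fun v : Fin d → EuclideanSpace ℝ (Fin D) => frobSq (projMatrix v - projMatrix W)
  have hF : Measurable F := (continuous_frobSq_projMatrix_sub _).measurable
  have hFV_bdd : ∀ ω, ‖F (V ω)‖ ≤ ∑ i, ∑ k, (d + |projMatrix W i k|) ^ 2 := fun ω => by
    rw [Real.norm_of_nonneg (by simp only [F, frobSq]; positivity)]
    exact frobSq_projMatrix_sub_le (hV ω) _
  have hFX : Integrable (fun ω => F (V ω) * ‖X ω‖ ^ 2) P :=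
    hX2.bdd_mul (hF.comp hVmeas).aestronglyMeasurable (.of_forall hFV_bdd)
  calc _ ≤ ∫ ω, F (V ω) * ‖X ω‖ ^ 2 ∂P :=
        integral_mono_of_nonneg (.of_forall fun ω => by positivity) hFX
          (.of_forall fun ω => sq_norm_sub_projection_le _ _ _)
    _ = _ := (hVX.comp hF (measurable_norm.pow_const 2)).integral_mul_eq_mul_integral
        (hF.comp hVmeas).aestronglyMeasurable (hX.norm.pow_const 2).aestronglyMeasurable

lemma W2_map_le {Ω : Type*} [MeasurableSpace Ω] {P : Measure Ω} [IsProbabilityMeasure P] {D : ℕ}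
    {A B : Ω → EuclideanSpace ℝ (Fin D)} (hA : AEMeasurable A P) (hB : AEMeasurable B P) :
    W2 (P.map A) (P.map B) ≤ √(∫ ω, ‖A ω - B ω‖ ^ 2 ∂P) := by
  have hAB : AEMeasurable (fun ω => (A ω, B ω)) P := hA.prodMk hB
  refine Real.sqrt_le_sqrt (csInf_le ⟨0, ?_⟩ ⟨P.map fun ω => (A ω, B ω),
    Measure.isProbabilityMeasure_map hAB, ?_, ?_, ?_⟩)
  · rintro r ⟨γ, -, -, -, rfl⟩
    positivity
  · rw [AEMeasurable.map_map_of_aemeasurable measurable_fst.aemeasurable hAB]; rfl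
  · rw [AEMeasurable.map_map_of_aemeasurable measurable_snd.aemeasurable hAB]; rfl
  · rw [integral_map hAB (by fun_prop)]

-- At `n = 0` both sides vanish: `x / 0 = 0` and `0 ^ (-1/2) = 0`.
lemma sqrt_four_mul_sq_div_mul_eq_rpow {M δ n : ℝ} (hM : 0 ≤ M) (hδ : 0 ≤ δ) (hn : 0 ≤ n) :
    √(4 * M ^ 2 / (δ ^ 2 * n) * M) = 2 * M ^ ((3 : ℝ) / 2) * δ⁻¹ * n ^ (-(1 : ℝ) / 2) := by
  have hM3 : (M ^ ((3 : ℝ) / 2)) ^ 2 = M ^ 3 := by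
    rw [← Real.rpow_natCast, ← Real.rpow_mul hM]; norm_num
  have hn1 : (n ^ (-(1 : ℝ) / 2)) ^ 2 = n⁻¹ := by
    rw [← Real.rpow_natCast, ← Real.rpow_mul hn]; norm_num [Real.rpow_neg_one]
  rw [Real.sqrt_eq_iff_eq_sq (by positivity) (by positivity), mul_pow, mul_pow, mul_pow, hM3, hn1]
  ring

theorem wasserstein_estimated_projection_rate_general
    {D d : ℕ} {Ω : Type*} [MeasurableSpace Ω] (P : Measure Ω) [IsProbabilityMeasure P]
    (X Z : Ω → EuclideanSpace ℝ (Fin D)) (hX : Measurable X) (hZ : Measurable Z)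
    (M : ℝ) (hX2 : Integrable (fun ω => ‖X ω‖ ^ 2) P) (hM : ∫ ω, ‖X ω‖ ^ 2 ∂P ≤ M)
    (Vd : Fin d → EuclideanSpace ℝ (Fin D))
    (Vhat : Ω → Fin d → EuclideanSpace ℝ (Fin D)) (hVhatMeas : Measurable Vhat)
    (hVhatON : ∀ ω, Orthonormal ℝ (Vhat ω))
    (hVhatX : IndepFun Vhat X P)
    (δd : ℝ) (hδd : 0 < δd) (n : ℕ)
    (hFrob : ∫ ω, frobSq (projMatrix (Vhat ω) - projMatrix Vd) ∂P ≤ 4 * M ^ 2 / (δd ^ 2 * n)) :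
    W2 (P.map fun ω => (∑ j, ⟪Vhat ω j, X ω⟫ • Vhat ω j) + Z ω)
       (P.map fun ω => (∑ j, ⟪Vd j, X ω⟫ • Vd j) + Z ω)
      ≤ 2 * M ^ ((3 : ℝ) / 2) * δd⁻¹ * (n : ℝ) ^ (-(1 : ℝ) / 2) := by
  have hX_sq_nonneg : 0 ≤ ∫ ω, ‖X ω‖ ^ 2 ∂P := integral_nonneg fun ω => by positivity
  calc _ ≤ √(∫ ω, ‖((∑ j, ⟪Vhat ω j, X ω⟫ • Vhat ω j) + Z ω)
          - ((∑ j, ⟪Vd j, X ω⟫ • Vd j) + Z ω)‖ ^ 2 ∂P) := W2_map_le (by fun_prop) (by fun_prop)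
    _ = √(∫ ω, ‖(∑ j, ⟪Vhat ω j, X ω⟫ • Vhat ω j) - ∑ j, ⟪Vd j, X ω⟫ • Vd j‖ ^ 2 ∂P) := by
        simp only [add_sub_add_right_eq_sub]
    _ ≤ √(4 * M ^ 2 / (δd ^ 2 * n) * M) := by
        gcongr
        refine (integral_sq_norm_sub_projection_le hX hX2 hVhatMeas
          (fun ω j => ((hVhatON ω).1 j).le) hVhatX Vd).trans ?_
        exact mul_le_mul hFrob hM hX_sq_nonneg (by positivity)
    _ = _ := sqrt_four_mul_sq_div_mul_eq_rpow (hX_sq_nonneg.trans hM) hδd.le n.cast_nonneg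

/-- under `E‖V̂_dV̂_dᵀ − V_dV_dᵀ‖_F² ≤ 4M²/(δ_d² n)`, with `V̂_d` independent of
`X`, `E‖X‖² ≤ M` and `Z ~ N(0,σ²I_D)` independent of `(X,V̂_d)`,
`W₂(V̂_dV̂_dᵀX + Z, V_dV_dᵀX + Z) ≤ 2M^{3/2} δ_d⁻¹ n^{-1/2}`. -/
theorem wasserstein_estimated_projection_rate
    {D d : ℕ} {Ω : Type*} [MeasurableSpace Ω] (P : Measure Ω) [IsProbabilityMeasure P]
    (X Z : Ω → EuclideanSpace ℝ (Fin D)) (hX : Measurable X) (hZ : Measurable Z)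
    (M : ℝ) (hX2 : Integrable (fun ω => ‖X ω‖ ^ 2) P) (hM : ∫ ω, ‖X ω‖ ^ 2 ∂P ≤ M)
    (Vd : Fin d → EuclideanSpace ℝ (Fin D)) (hVdON : Orthonormal ℝ Vd)
    (Vhat : Ω → Fin d → EuclideanSpace ℝ (Fin D)) (hVhatMeas : Measurable Vhat)
    (hVhatON : ∀ ω, Orthonormal ℝ (Vhat ω))
    (hVhatX : IndepFun Vhat X P)
    (δd : ℝ) (hδd : 0 < δd) (n : ℕ) (hn : 1 ≤ n)
    (hFrob : ∫ ω, frobSq (projMatrix (Vhat ω) - projMatrix Vd) ∂P ≤ 4 * M ^ 2 / (δd ^ 2 * n))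
    (σ : ℝ) (hσ : 0 < σ) (hZlaw : P.map Z = stdGaussian D σ)
    (hZindep : IndepFun (fun ω => (X ω, Vhat ω)) Z P) :
    W2 (P.map fun ω => (∑ j, ⟪Vhat ω j, X ω⟫ • Vhat ω j) + Z ω)
       (P.map fun ω => (∑ j, ⟪Vd j, X ω⟫ • Vd j) + Z ω)
      ≤ 2 * M ^ ((3 : ℝ) / 2) * δd⁻¹ * (n : ℝ) ^ (-(1 : ℝ) / 2) :=
  wasserstein_estimated_projection_rate_general P X Z hX hZ M hX2 hM Vd Vhat hVhatMeas hVhatON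
    hVhatX δd hδd n hFrob
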